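/- arXiv:2409.05158 — 5 statements merged into one kernel-verified Lean document; each statement's English description precedes it below -/
import Mathlib

section
/- With Γ₀ and F_V as defined, for V = (i,a,b) ∈ Γ₀, the set {U ∈ Γ₀ : U ∈ F_V and deg f_{U,V} = 1} equals {(i,a,b+1)} ∪ {(i,a+1,b) if a+1 ≤ b + δ_{i,0}·m}; in particular it has exactly one element if and only if b = a − δ_{i,0}·m, and exactly two elements otherwise. -/
/-- The vertex set `Γ₀ = {(i,a,b) : i ∈ [0,n-1], a ≤ b + δ_{i,0}·m}`. -/
def Gamma0 (n m : ℤ) : Set (ℤ × ℤ × ℤ) :=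
  {V | 0 ≤ V.1 ∧ V.1 ≤ n - 1 ∧ V.2.1 ≤ V.2.2 + (if V.1 = 0 then m else 0)}

/-- For `V = (i,a,b)`, the set `F_V = {(i,x,y) : a ≤ x ≤ b + δ_{i,0}·m, y ≥ b}`. -/
def Fset (n m : ℤ) (V : ℤ × ℤ × ℤ) : Set (ℤ × ℤ × ℤ) :=
  {U | U.1 = V.1 ∧ V.2.1 ≤ U.2.1 ∧
    U.2.1 ≤ V.2.2 + (if V.1 = 0 then m else 0) ∧ V.2.2 ≤ U.2.2}

/-- For `V = (i,a,b)`, the set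
`G_V = {(i+1 mod n, x, y) : x ≤ a + δ_{i,n-1}·m, a ≤ y ≤ b + δ_{i,0}·m}`. -/
def Gset (n m : ℤ) (V : ℤ × ℤ × ℤ) : Set (ℤ × ℤ × ℤ) :=
  {U | U.1 = (V.1 + 1) % n ∧ U.2.1 ≤ V.2.1 + (if V.1 = n - 1 then m else 0) ∧
    V.2.1 ≤ U.2.2 ∧ U.2.2 ≤ V.2.2 + (if V.1 = 0 then m else 0)}

/-- The degree of the arrow `f_{U,V}`. -/
def degF (V U : ℤ × ℤ × ℤ) : ℤ := (U.2.1 - V.2.1) + (U.2.2 - V.2.2)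

theorem stmt13 (n m : ℤ) (hn : 1 ≤ n) (hm : 0 ≤ m)
    (i a b : ℤ) (hV : (i, a, b) ∈ Gamma0 n m) :
    {U | U ∈ Fset n m (i, a, b) ∧ degF (i, a, b) U = 1} =
      {(i, a, b + 1)} ∪
        {U | U = (i, a + 1, b) ∧ a + 1 ≤ b + (if i = 0 then m else 0)} ∧
    ((∃! U, U ∈ {U | U ∈ Fset n m (i, a, b) ∧ degF (i, a, b) U = 1}) ↔
      b = a - (if i = 0 then m else 0)) ∧
    (b ≠ a - (if i = 0 then m else 0) →
      ∃ U₁ U₂ : ℤ × ℤ × ℤ, U₁ ≠ U₂ ∧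
        {U | U ∈ Fset n m (i, a, b) ∧ degF (i, a, b) U = 1} = {U₁, U₂}) := by
  obtain ⟨h0, h1, h2⟩ := hV
  simp only [Gamma0, Set.mem_setOf_eq] at h2
  have hset : {U | U ∈ Fset n m (i, a, b) ∧ degF (i, a, b) U = 1} =
      {(i, a, b + 1)} ∪
        {U | U = (i, a + 1, b) ∧ a + 1 ≤ b + (if i = 0 then m else 0)} := by
    ext ⟨j, x, y⟩
    simp only [Fset, degF, Set.mem_setOf_eq, Set.mem_union, Set.mem_singleton_iff,
      Prod.mk.injEq]
    constructor
    · rintro ⟨⟨hj, hx1, hx2, hy⟩, hd⟩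
      split_ifs at * <;> omega
    · rintro (⟨hj, hx, hy⟩ | ⟨⟨hj, hx, hy⟩, hle⟩) <;>
        (subst hj; split_ifs at * <;> omega)
  refine ⟨hset, ?_, ?_⟩
  · rw [hset]
    constructor
    · rintro ⟨U, hU, hu⟩
      by_contra hb
      have h1' := hu (i, a, b + 1) (Or.inl rfl)
      have h2' := hu (i, a + 1, b) (Or.inr ⟨rfl, by split_ifs at * <;> omega⟩)
      rw [← h2'] at h1'
      simp [Prod.ext_iff] at h1'
    · intro hb
      refine ⟨(i, a, b + 1), Or.inl rfl, ?_⟩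
      rintro ⟨j, x, y⟩ (h | ⟨h, hle⟩)
      · exact h
      · exfalso; split_ifs at * <;> omega
  · intro hb
    refine ⟨(i, a, b + 1), (i, a + 1, b), ?_, ?_⟩
    · simp [Prod.ext_iff]
    · rw [hset]
      ext ⟨j, x, y⟩
      simp only [Set.mem_union, Set.mem_singleton_iff, Set.mem_setOf_eq,
        Set.mem_insert_iff, Prod.mk.injEq]
      constructor
      · rintro (h | ⟨h, hle⟩)
        · exact Or.inl h
        · exact Or.inr h
      · rintro (h | h)
        · exact Or.inl h
        · refine Or.inr ⟨h, ?_⟩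
          split_ifs at * <;> omega
end

section
/- For n ≥ 1, m ≥ 0, define the suspension on Γ₀ by Σ(i,a,b) = (i+1 mod n, a + 1 + δ_{i,n−1}·m, b + 1 + δ_{i,0}·m). Then Σ maps Γ₀ bijectively onto Γ₀, and Σ^n (i,a,b) = (i, a + n + m, b + n + m) for all (i,a,b) ∈ Γ₀. -/
/-- The suspension `Σ(i,a,b) = (i+1 mod n, a+1+δ_{i,n-1}·m, b+1+δ_{i,0}·m)`. -/
def SigmaMap (n m : ℤ) (V : ℤ × ℤ × ℤ) : ℤ × ℤ × ℤ :=
  ((V.1 + 1) % n, V.2.1 + 1 + (if V.1 = n - 1 then m else 0),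
    V.2.2 + 1 + (if V.1 = 0 then m else 0))

/-!
Unwinding the index `i` to an integer `x` with `i = x % n`, the coordinate `a` jumps by `m`
exactly when `x` steps onto a multiple of `n`, and `b` exactly when it steps off one, so
after `k` steps from `(i,a,b)` the jumps are counted by `(i + k) / n` and
`(i + k - 1) / n - (i - 1) / n`. For `k = n` each count is one, so `Σⁿ` is the translation by
`n + m` in both coordinates, which is a bijection of `Γ₀`. As `Σ` maps `Γ₀` into itself, this
forces `Σ` itself to be bijective on `Γ₀`.
-/

open Set

theorem Set.BijOn.of_iterate {α : Type*} {f : α → α} {s : Set α} {k : ℕ} (hk : k ≠ 0)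
    (hf : MapsTo f s s) (h : BijOn f^[k] s s) : BijOn f s s := by
  obtain ⟨k, rfl⟩ := Nat.exists_eq_succ_of_ne_zero hk
  refine ⟨hf, fun x hx y hy hxy => h.injOn hx hy ?_, fun y hy => ?_⟩
  · simp only [Function.iterate_succ_apply, hxy]
  · obtain ⟨x, hx, rfl⟩ := h.surjOn hy
    exact ⟨f^[k] x, hf.iterate k hx, (Function.iterate_succ_apply' f k x).symm⟩

theorem Int.add_one_ediv_emod {n : ℤ} (hn : 0 < n) (x : ℤ) :
    (x + 1) / n = x / n + (if x % n = n - 1 then 1 else 0) ∧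
      (x + 1) % n = if x % n = n - 1 then 0 else x % n + 1 := by
  have hx := Int.emod_add_mul_ediv x n
  have hr := Int.emod_nonneg x hn.ne'
  have hr' := Int.emod_lt_of_pos x hn
  split_ifs with h
  · exact (Int.ediv_emod_unique hn).mpr ⟨by rw [mul_add]; omega, le_rfl, hn⟩
  · exact (Int.ediv_emod_unique hn).mpr ⟨by rw [add_zero]; omega, by omega, by omega⟩

theorem Int.add_one_emod_of_lt {n i : ℤ} (hi : 0 ≤ i) (hin : i < n) :
    (i + 1) % n = if i = n - 1 then 0 else i + 1 := by
  simpa only [Int.emod_eq_of_lt hi hin] using (Int.add_one_ediv_emod (hi.trans_lt hin) i).2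

section

variable {n m : ℤ}

theorem mapsTo_sigmaMap (hn : 0 < n) : MapsTo (SigmaMap n m) (Gamma0 n m) (Gamma0 n m) := by
  rintro ⟨i, a, b⟩ ⟨hi, hin, hab⟩
  simp only [Gamma0, SigmaMap, mem_ofPred_eq] at hi hin hab ⊢
  rw [Int.add_one_emod_of_lt hi (by omega)]
  split_ifs at hab ⊢ <;> omega

theorem sigmaMap_iterate (hn : 0 < n) {i : ℤ} (hi : 0 ≤ i) (hin : i < n) (a b : ℤ) (k : ℕ) :
    (SigmaMap n m)^[k] (i, a, b) =
      ((i + k) % n, a + k + m * ((i + k) / n), b + k + m * ((i + k - 1) / n - (i - 1) / n)) := by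
  induction k with
  | zero => simp [Int.emod_eq_of_lt hi hin, Int.ediv_eq_zero_of_lt hi hin]
  | succ k ih =>
    rw [Function.iterate_succ_apply', ih]
    have hsucc := Int.add_one_ediv_emod hn (i + k)
    have hpred := Int.add_one_ediv_emod hn (i + k - 1)
    rw [sub_add_cancel] at hpred
    have hzero : (i + k) % n = 0 ↔ (i + k - 1) % n = n - 1 := by
      have := Int.emod_nonneg (i + k - 1) hn.ne'
      rw [hpred.2]
      split_ifs with h
      · simp only [h]
      · simp only [h, iff_false]
        omega
    push_cast
    simp only [SigmaMap, Int.emod_add_emod, ← add_assoc, add_sub_cancel_right, hsucc.1, hpred.1,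
      hzero, Prod.mk.injEq]
    refine ⟨trivial, ?_, ?_⟩ <;> split_ifs <;> ring

theorem sigmaMap_iterate_of_mem (hn : 0 < n) {V : ℤ × ℤ × ℤ} (hV : V ∈ Gamma0 n m) :
    (SigmaMap n m)^[n.toNat] V = (V.1, V.2.1 + n + m, V.2.2 + n + m) := by
  obtain ⟨i, a, b⟩ := V
  obtain ⟨hi, hin, -⟩ := hV
  have hself : ∀ x : ℤ, (x + n) / n = x / n + 1 := fun x => by
    rw [Int.add_ediv_of_dvd_right dvd_rfl, Int.ediv_self hn.ne']
  rw [sigmaMap_iterate hn hi (by omega), Int.toNat_of_nonneg hn.le, Int.add_emod_right,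
    Int.emod_eq_of_lt hi (by omega), hself, Int.ediv_eq_zero_of_lt hi (by omega),
    add_sub_right_comm, hself]
  simp only [Prod.mk.injEq]
  exact ⟨trivial, by ring, by ring⟩

theorem bijOn_translate_gamma0 (c : ℤ) :
    BijOn (fun V : ℤ × ℤ × ℤ => (V.1, V.2.1 + c, V.2.2 + c)) (Gamma0 n m) (Gamma0 n m) := by
  refine ⟨fun V hV => ?_, fun V _ W _ h => ?_, fun V hV => ⟨(V.1, V.2.1 - c, V.2.2 - c), ?_, ?_⟩⟩
  · simp only [Gamma0, mem_ofPred_eq] at hV ⊢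
    omega
  · simp only [Prod.mk.injEq, add_left_inj] at h
    exact Prod.ext h.1 (Prod.ext h.2.1 h.2.2)
  · simp only [Gamma0, mem_ofPred_eq] at hV ⊢
    omega
  · simp

end

theorem stmt14_general (n m : ℤ) (hn : 1 ≤ n) :
    Set.BijOn (SigmaMap n m) (Gamma0 n m) (Gamma0 n m) ∧
    ∀ V ∈ Gamma0 n m,
      (SigmaMap n m)^[n.toNat] V = (V.1, V.2.1 + n + m, V.2.2 + n + m) := by
  have hn : 0 < n := hn
  have hiterate : EqOn (fun V => (V.1, V.2.1 + (n + m), V.2.2 + (n + m))) (SigmaMap n m)^[n.toNat]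
      (Gamma0 n m) := fun V hV => by
    simp only [sigmaMap_iterate_of_mem hn hV, add_assoc]
  refine ⟨?_, fun V hV => sigmaMap_iterate_of_mem hn hV⟩
  exact ((bijOn_translate_gamma0 _).congr hiterate).of_iterate (by omega) (mapsTo_sigmaMap hn)

theorem stmt14 (n m : ℤ) (hn : 1 ≤ n) (hm : 0 ≤ m) :
    Set.BijOn (SigmaMap n m) (Gamma0 n m) (Gamma0 n m) ∧
    ∀ V ∈ Gamma0 n m,
      (SigmaMap n m)^[n.toNat] V = (V.1, V.2.1 + n + m, V.2.2 + n + m) :=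
  stmt14_general n m hn
end

section
/- With Γ₀ and the map Θ on vertices as defined, Θ gives a well-defined map from {(i,p,q,r,t) : i ∈ [0,n−1], p,q ∈ ℤ, r,t ∈ [−n+1,m], p·(m+n)+r ≤ q·(m+n)+t} to the set C of quadruples (k,u,l,v) with k ∈ ℤ, l ∈ ℕ, u,v ∈ [−m,n−1] and (v = s^l(u) or v < s^l(u) ≤ 0); i.e., in each of the five cases of the definition of Θ, the output quadruple satisfies the defining conditions of C (in particular the produced l is a nonnegative integer and the constraint between v and s^l(u) holds). -/
/-- The starting-vertex map `s` of the algebra `Λ(n,m)`. -/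
def sMap (n u : ℤ) : ℤ :=
  if n = 1 then 0
  else if u = n - 1 then 0
  else if u < 0 then 1
  else u + 1

/-- The object assignment `Θ(i, p(m+n)+r+i, q(m+n)+t+i-δ_{i,0}m)`, defined case
by case in terms of the parameters `(i,p,q,r,t)`, output `(k,u,l,v)`. -/
def Theta (n m i p q r t : ℤ) : ℤ × ℤ × ℤ × ℤ :=
  if r ≤ 0 ∧ t ≤ -1 then
    (-q * n - t - i, -t, (q - p) * n + (t - r), -r)
  else if r ≤ 0 ∧ 0 ≤ t ∧ 0 < (q - p) * n - r then
    (-q * n - i, -m + t, (q - p) * n - r, -r)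
  else if r ≤ 0 ∧ 0 ≤ t then
    (-q * n - i, -m + t, 0, -m + t)
  else if t ≤ -1 then
    (-q * n - t - i, -t, (q - p) * n + t, -m - 1 + r)
  else
    (-q * n - i, -m + t, (q - p) * n, -m - 1 + r)

/-- The set `C` of quadruples `(k,u,l,v)` with `k ∈ ℤ`, `l ∈ ℕ`,
`u, v ∈ [-m, n-1]`, and either `v = s^l(u)` or `v < s^l(u) ≤ 0`. -/
def Cset (n m : ℤ) : Set (ℤ × ℤ × ℤ × ℤ) :=
  {w | 0 ≤ w.2.2.1 ∧
    (-m ≤ w.2.1 ∧ w.2.1 ≤ n - 1) ∧ (-m ≤ w.2.2.2 ∧ w.2.2.2 ≤ n - 1) ∧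
    (w.2.2.2 = (sMap n)^[w.2.2.1.toNat] w.2.1 ∨
      (w.2.2.2 < (sMap n)^[w.2.2.1.toNat] w.2.1 ∧
        (sMap n)^[w.2.2.1.toNat] w.2.1 ≤ 0))}

/-- The domain of `Θ`: tuples `(i,p,q,r,t)` with `i ∈ [0,n-1]`,
`r, t ∈ [-n+1, m]` and `p(m+n)+r ≤ q(m+n)+t`. -/
def ThetaDom (n m : ℤ) : Set (ℤ × ℤ × ℤ × ℤ × ℤ) :=
  {x | (0 ≤ x.1 ∧ x.1 ≤ n - 1) ∧
    (-n + 1 ≤ x.2.2.2.1 ∧ x.2.2.2.1 ≤ m) ∧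
    (-n + 1 ≤ x.2.2.2.2 ∧ x.2.2.2.2 ≤ m) ∧
    x.2.1 * (m + n) + x.2.2.2.1 ≤ x.2.2.1 * (m + n) + x.2.2.2.2}

/-!
Write `d = q - p`. Since `r - t > -(m + n)`, the hypothesis `p(m+n) + r ≤ q(m+n) + t` forces
`d ≥ 0`, and `d = 0` only when `r ≤ t`. On the cycle `[0, n-1]` the map `s` is
`u ↦ u + 1 mod n`, and any `u ≤ 0` is sent into the cycle at `1 mod n`; hence
`s^l(u) = u + l mod n` for `u` on the cycle and `s^l(u) = l mod n` for `u ≤ 0 < l`. In each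
case of `Θ` the length `l` is, up to the multiple `d n` of `n`, exactly the offset that makes
this residue equal to `v`, or equal to `0` when `v < 0`.
-/

section SMap

variable {n u : ℤ}

lemma sMap_of_mem_Icc (hn : 1 ≤ n) (hu₀ : 0 ≤ u) (hu₁ : u ≤ n - 1) :
    sMap n u = (u + 1) % n := by
  unfold sMap
  split_ifs with h1 h2 h3
  · subst h1; simp
  · subst h2; simp
  · omega
  · exact (Int.emod_eq_of_lt (by omega) (by omega)).symm

lemma sMap_of_nonpos (hn : 1 ≤ n) (hu : u ≤ 0) : sMap n u = 1 % n := by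
  unfold sMap
  split_ifs with h1 h2 h3
  · subst h1; simp
  · omega
  · exact (Int.emod_eq_of_lt (by omega) (by omega)).symm
  · rw [Int.emod_eq_of_lt (by omega) (by omega)]; omega

lemma sMap_iterate_of_mem_Icc (hn : 1 ≤ n) (l : ℕ) (hu₀ : 0 ≤ u) (hu₁ : u ≤ n - 1) :
    (sMap n)^[l] u = (u + l) % n := by
  induction l with
  | zero => simp [Int.emod_eq_of_lt hu₀ (by omega : u < n)]
  | succ l ih =>
    have hlt := Int.emod_lt_of_pos (u + l) (by omega : 0 < n)
    rw [Function.iterate_succ_apply', ih,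
      sMap_of_mem_Icc hn (Int.emod_nonneg _ (by omega)) (by omega), Int.emod_add_emod]
    push_cast
    ring_nf

lemma sMap_iterate_succ_of_nonpos (hn : 1 ≤ n) (l : ℕ) (hu : u ≤ 0) :
    (sMap n)^[l + 1] u = (l + 1) % n := by
  have hlt := Int.emod_lt_of_pos 1 (by omega : 0 < n)
  rw [Function.iterate_succ_apply, sMap_of_nonpos hn hu,
    sMap_iterate_of_mem_Icc hn l (Int.emod_nonneg _ (by omega)) (by omega), Int.emod_add_emod,
    add_comm]

lemma sMap_iterate_toNat_of_modEq {l v : ℤ} (hn : 1 ≤ n) (hu₀ : 0 ≤ u) (hu₁ : u ≤ n - 1)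
    (hv₀ : 0 ≤ v) (hv₁ : v ≤ n - 1) (hl : 0 ≤ l) (h : u + l ≡ v [ZMOD n]) :
    (sMap n)^[l.toNat] u = v := by
  rw [sMap_iterate_of_mem_Icc hn _ hu₀ hu₁, Int.toNat_of_nonneg hl, h.eq,
    Int.emod_eq_of_lt hv₀ (by omega)]

lemma sMap_iterate_toNat_of_nonpos_of_modEq {l v : ℤ} (hn : 1 ≤ n) (hu : u ≤ 0)
    (hv₀ : 0 ≤ v) (hv₁ : v ≤ n - 1) (hl : 0 < l) (h : l ≡ v [ZMOD n]) :
    (sMap n)^[l.toNat] u = v := by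
  obtain ⟨k, hk⟩ : ∃ k : ℕ, l = k + 1 := ⟨(l - 1).toNat, by omega⟩
  subst hk
  rw [show ((k : ℤ) + 1).toNat = k + 1 by omega, sMap_iterate_succ_of_nonpos hn k hu, h.eq,
    Int.emod_eq_of_lt hv₀ (by omega)]

end SMap

section Cset

variable {n m k u l v : ℤ}

lemma mk_mem_Cset_iff : (k, u, l, v) ∈ Cset n m ↔ 0 ≤ l ∧ (-m ≤ u ∧ u ≤ n - 1) ∧
    (-m ≤ v ∧ v ≤ n - 1) ∧ (v = (sMap n)^[l.toNat] u ∨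
      v < (sMap n)^[l.toNat] u ∧ (sMap n)^[l.toNat] u ≤ 0) :=
  Iff.rfl

lemma mk_mem_Cset_of_modEq (hn : 1 ≤ n) (hm : 0 ≤ m) (hu : 0 ≤ u ∧ u ≤ n - 1)
    (hv : 0 ≤ v ∧ v ≤ n - 1) (hl : 0 ≤ l) (h : u + l ≡ v [ZMOD n]) :
    (k, u, l, v) ∈ Cset n m :=
  mk_mem_Cset_iff.2 ⟨hl, ⟨by omega, hu.2⟩, ⟨by omega, hv.2⟩,
    Or.inl (sMap_iterate_toNat_of_modEq hn hu.1 hu.2 hv.1 hv.2 hl h).symm⟩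

lemma mk_mem_Cset_of_nonpos_of_modEq (hn : 1 ≤ n) (hu : -m ≤ u ∧ u ≤ 0)
    (hv : 0 ≤ v ∧ v ≤ n - 1) (hl : 0 < l) (h : l ≡ v [ZMOD n]) :
    (k, u, l, v) ∈ Cset n m :=
  mk_mem_Cset_iff.2 ⟨hl.le, ⟨hu.1, by omega⟩, ⟨by omega, hv.2⟩,
    Or.inl (sMap_iterate_toNat_of_nonpos_of_modEq hn hu.2 hv.1 hv.2 hl h).symm⟩

lemma mk_mem_Cset_of_modEq_zero (hn : 1 ≤ n) (hu : 0 ≤ u ∧ u ≤ n - 1)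
    (hv : -m ≤ v ∧ v < 0) (hl : 0 ≤ l) (h : u + l ≡ 0 [ZMOD n]) :
    (k, u, l, v) ∈ Cset n m := by
  have hs := sMap_iterate_toNat_of_modEq hn hu.1 hu.2 le_rfl (by omega) hl h
  exact mk_mem_Cset_iff.2
    ⟨hl, ⟨by omega, hu.2⟩, ⟨hv.1, by omega⟩, Or.inr ⟨by omega, hs.le⟩⟩

lemma mk_mem_Cset_of_nonpos_of_modEq_zero (hn : 1 ≤ n) (hu : -m ≤ u ∧ u ≤ 0)
    (hv : -m ≤ v ∧ v < 0) (hl : 0 < l) (h : l ≡ 0 [ZMOD n]) :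
    (k, u, l, v) ∈ Cset n m := by
  have hs := sMap_iterate_toNat_of_nonpos_of_modEq hn hu.2 le_rfl (by omega) hl h
  exact mk_mem_Cset_iff.2
    ⟨hl.le, ⟨hu.1, by omega⟩, ⟨hv.1, by omega⟩, Or.inr ⟨by omega, hs.le⟩⟩

end Cset

lemma eq_and_le_or_lt_of_mul_add_le {n m p q r t : ℤ} (hr : -n + 1 ≤ r ∧ r ≤ m)
    (ht : -n + 1 ≤ t ∧ t ≤ m) (hle : p * (m + n) + r ≤ q * (m + n) + t) :
    q = p ∧ r ≤ t ∨ p < q := by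
  rcases lt_trichotomy p q with h | rfl | h
  · exact Or.inr h
  · exact Or.inl ⟨rfl, by omega⟩
  · nlinarith

theorem stmt17_general (n m : ℤ) (hn : 1 ≤ n) (hm : 0 ≤ m)
    (i p q r t : ℤ)
    (hr : -n + 1 ≤ r ∧ r ≤ m) (ht : -n + 1 ≤ t ∧ t ≤ m)
    (hle : p * (m + n) + r ≤ q * (m + n) + t) :
    Theta n m i p q r t ∈ Cset n m := by
  have hgap := eq_and_le_or_lt_of_mul_add_le hr ht hle
  have hdn : p < q → n ≤ (q - p) * n := fun h => le_mul_of_one_le_left (by omega) (by omega)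
  obtain ⟨hr₀, hr₁⟩ := hr
  obtain ⟨ht₀, ht₁⟩ := ht
  unfold Theta
  split_ifs with h₁ h₂ h₃ h₄
  · have hl : 0 ≤ (q - p) * n + (t - r) := by
      rcases hgap with ⟨rfl, _⟩ | h
      · simp only [sub_self, zero_mul]; omega
      · have := hdn h; omega
    exact mk_mem_Cset_of_modEq hn hm ⟨by omega, by omega⟩ ⟨by omega, by omega⟩ hl
      (Int.modEq_iff_dvd.2 ⟨p - q, by ring⟩)
  · exact mk_mem_Cset_of_nonpos_of_modEq hn ⟨by omega, by omega⟩ ⟨by omega, by omega⟩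
      h₂.2.2 (Int.modEq_iff_dvd.2 ⟨p - q, by ring⟩)
  · exact mk_mem_Cset_iff.2
      ⟨le_rfl, ⟨by omega, by omega⟩, ⟨by omega, by omega⟩, Or.inl rfl⟩
  · have hpq : p < q := hgap.resolve_left (by omega)
    have := hdn hpq
    exact mk_mem_Cset_of_modEq_zero hn ⟨by omega, by omega⟩ ⟨by omega, by omega⟩ (by omega)
      (Int.modEq_iff_dvd.2 ⟨p - q, by ring⟩)
  · rcases hgap with ⟨rfl, hrt⟩ | hpq
    · simp only [mk_mem_Cset_iff, sub_self, zero_mul, Int.toNat_zero,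
        Function.iterate_zero_apply]
      omega
    · have := hdn hpq
      exact mk_mem_Cset_of_nonpos_of_modEq_zero hn ⟨by omega, by omega⟩ ⟨by omega, by omega⟩
        (by omega) (Int.modEq_iff_dvd.2 ⟨p - q, by ring⟩)

/-- In each case of its definition, `Θ` produces a quadruple `(k,u,l,v)`
belonging to `C`: `l` is nonnegative, `u, v ∈ [-m, n-1]`, and the constraint
between `v` and `s^l(u)` holds. -/
theorem stmt17 (n m : ℤ) (hn : 1 ≤ n) (hm : 0 ≤ m)
    (i p q r t : ℤ)
    (hi : 0 ≤ i ∧ i ≤ n - 1)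
    (hr : -n + 1 ≤ r ∧ r ≤ m) (ht : -n + 1 ≤ t ∧ t ≤ m)
    (hle : p * (m + n) + r ≤ q * (m + n) + t) :
    Theta n m i p q r t ∈ Cset n m :=
  stmt17_general n m hn hm i p q r t hr ht hle
end

section
/- The map Θ on vertices (as defined in the five cases) is a bijection between {(i,p,q,r,t) : i ∈ [0,n−1], p,q ∈ ℤ, r,t ∈ [−n+1,m], p·(m+n)+r ≤ q·(m+n)+t} and the set C of quadruples (k,u,l,v), k ∈ ℤ, l ∈ ℕ, u,v ∈ [−m,n−1] with v = s^l(u) or v < s^l(u) ≤ 0. -/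
lemma emod_congr {n a b : ℤ} (h : n ∣ a - b) : a % n = b % n :=
  (Int.modEq_iff_dvd.mpr h).symm

lemma emod_eq' {n : ℤ} (hn : 0 < n) (a b c : ℤ) (h : a = b + n * c)
    (h0 : 0 ≤ b) (h1 : b < n) : a % n = b := by
  subst h
  rw [Int.add_mul_emod_self_left]
  exact Int.emod_eq_of_lt h0 h1

lemma euclid {n a q i : ℤ} (hn : 0 < n) (h : a = q * n + i)
    (h0 : 0 ≤ i) (h1 : i < n) : a / n = q ∧ a % n = i := by
  subst h
  constructor
  · rw [add_comm, Int.add_mul_ediv_right _ _ (by omega : n ≠ 0),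
      Int.ediv_eq_zero_of_lt h0 h1, zero_add]
  · rw [add_comm, Int.add_mul_emod_self_right]
    exact Int.emod_eq_of_lt h0 h1

lemma dvd_sub_emod (n a : ℤ) : n ∣ a - a % n :=
  ⟨a / n, by have := Int.mul_ediv_add_emod a n; linarith⟩

lemma iter_aux {n : ℤ} (hn : 2 ≤ n) (x : ℤ) (hx : 0 ≤ x) (hx' : x < n) (k : ℕ) :
    (sMap n)^[k] x = (x + k) % n := by
  induction k with
  | zero => simpa using (Int.emod_eq_of_lt hx hx').symm
  | succ k ih =>
    rw [Function.iterate_succ_apply', ih]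
    have h0 : 0 ≤ (x + (k : ℤ)) % n := Int.emod_nonneg _ (by omega)
    have h1 : (x + (k : ℤ)) % n < n := Int.emod_lt_of_pos _ (by omega)
    have hcg : (x + ((k : ℕ) + 1 : ℕ) : ℤ) % n = ((x + (k : ℤ)) % n + 1) % n := by
      push_cast
      exact emod_congr ⟨(x + (k : ℤ)) / n, by
        have := Int.mul_ediv_add_emod (x + (k : ℤ)) n; linarith⟩
    rw [hcg]
    by_cases hy : (x + (k : ℤ)) % n = n - 1
    · rw [hy]
      have : (n - 1 + 1) % n = 0 := by
        rw [show n - 1 + 1 = n by ring, Int.emod_self]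
      rw [this, sMap, if_neg (by omega), if_pos rfl]
    · rw [sMap, if_neg (by omega : ¬ n = 1), if_neg hy, if_neg (by omega)]
      exact (Int.emod_eq_of_lt (by omega) (by omega)).symm

lemma sMap_iterate {n : ℤ} (hn : 1 ≤ n) (u : ℤ) (hu : u ≤ n - 1) (l : ℕ) :
    (sMap n)^[l] u = if l = 0 then u else (max u 0 + l) % n := by
  rcases Nat.eq_zero_or_pos l with h | h
  · simp [h]
  obtain ⟨k, rfl⟩ : ∃ k, l = k + 1 := ⟨l - 1, by omega⟩
  rw [if_neg (by omega)]
  rcases eq_or_lt_of_le hn with h1 | h1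
  · have hfix : ∀ j : ℕ, (sMap n)^[j] 0 = 0 :=
      fun j => Function.iterate_fixed (by simp [sMap, ← h1]) j
    rw [Function.iterate_succ_apply, show sMap n u = 0 by simp [sMap, ← h1], hfix,
      ← h1, Int.emod_one]
  · rcases le_or_gt 0 u with hu0 | hu0
    · rw [max_eq_left hu0]
      exact iter_aux (by omega) u hu0 (by omega) (k + 1)
    · rw [max_eq_right hu0.le, Function.iterate_succ_apply,
        show sMap n u = 1 by rw [sMap, if_neg (by omega), if_neg (by omega), if_pos hu0],
        iter_aux (by omega) 1 (by omega) (by omega) k]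
      congr 1
      push_cast
      ring

lemma iter_int {n : ℤ} (hn : 1 ≤ n) {u : ℤ} (hu : u ≤ n - 1) {l : ℤ} (hl : 0 ≤ l) :
    (sMap n)^[l.toNat] u = if l = 0 then u else (max u 0 + l) % n := by
  rw [sMap_iterate hn u hu]
  rcases eq_or_ne l 0 with rfl | h
  · simp
  · rw [if_neg (by omega : ¬ l.toNat = 0), if_neg h, Int.toNat_of_nonneg hl]

lemma nonneg_of {M d c : ℤ} (hM : 0 < M) (hc : -M < c) (h : c ≤ d * M) : 0 ≤ d := by
  by_contra hd
  push_neg at hd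
  have : d * M ≤ (-1) * M := mul_le_mul_of_nonneg_right (by omega) hM.le
  omega

lemma pos_of {M d c : ℤ} (hM : 0 < M) (hc : 0 < c) (h : c ≤ d * M) : 1 ≤ d := by
  by_contra hd
  push_neg at hd
  have : d * M ≤ 0 * M := mul_le_mul_of_nonneg_right (by omega) hM.le
  omega

lemma theta_mapsTo (n m : ℤ) (hn : 1 ≤ n) (hm : 0 ≤ m) :
    ∀ x ∈ ThetaDom n m,
      Theta n m x.1 x.2.1 x.2.2.1 x.2.2.2.1 x.2.2.2.2 ∈ Cset n m := by
  rintro ⟨i, p, q, r, t⟩ hx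
  simp only [ThetaDom, Set.mem_setOf_eq] at hx
  obtain ⟨⟨hi0, hi1⟩, ⟨hr0, hr1⟩, ⟨ht0, ht1⟩, hle⟩ := hx
  have hn0 : (0:ℤ) < n := by omega
  have hd : r - t ≤ (q - p) * (m + n) := by nlinarith
  simp only [Theta]
  split_ifs with h1 h2 h3 h4
  · -- case 1 : r ≤ 0, t ≤ -1
    obtain ⟨hr, ht⟩ := h1
    have hn2 : 2 ≤ n := by omega
    have hqp : 0 ≤ q - p := nonneg_of (by omega) (by omega) hd
    have hl0 : 0 ≤ (q - p) * n + (t - r) := by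
      rcases eq_or_lt_of_le hqp with h | h
      · nlinarith
      · have : n ≤ (q - p) * n := le_mul_of_one_le_left (by omega) (by omega)
        omega
    simp only [Cset, Set.mem_setOf_eq]
    refine ⟨hl0, ⟨by omega, by omega⟩, ⟨by omega, by omega⟩, ?_⟩
    rw [iter_int hn (by omega : -t ≤ n - 1) hl0]
    by_cases hl : (q - p) * n + (t - r) = 0
    · rw [if_pos hl]
      left
      have : ¬ (1 ≤ q - p) := by
        intro h
        have : n ≤ (q - p) * n := le_mul_of_one_le_left (by omega) h
        omega
      have hq : q - p = 0 := by omega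
      nlinarith
    · rw [if_neg hl, max_eq_left (by omega : (0:ℤ) ≤ -t)]
      left
      exact (emod_eq' hn0 _ _ (q - p) (by ring) (by omega) (by omega)).symm
  · -- case 2
    obtain ⟨hr, ht, hpos⟩ := h2
    have hl0 : 0 ≤ (q - p) * n - r := by omega
    simp only [Cset, Set.mem_setOf_eq]
    refine ⟨hl0, ⟨by omega, by omega⟩, ⟨by omega, by omega⟩, ?_⟩
    rw [iter_int hn (by omega : -m + t ≤ n - 1) hl0, if_neg (by omega),
      max_eq_right (by omega : -m + t ≤ 0)]
    left
    exact (emod_eq' hn0 _ _ (q - p) (by ring) (by omega) (by omega)).symm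
  · -- case 3
    obtain ⟨hr, ht⟩ := h3
    simp only [Cset, Set.mem_setOf_eq]
    refine ⟨le_refl 0, ⟨by omega, by omega⟩, ⟨by omega, by omega⟩, ?_⟩
    rw [iter_int hn (by omega : -m + t ≤ n - 1) (le_refl (0:ℤ)), if_pos rfl]
    left; rfl
  · -- case 4
    have hr : 1 ≤ r := by
      by_contra h
      exact h1 ⟨by omega, h4⟩
    have hn2 : 2 ≤ n := by omega
    have hqp : 1 ≤ q - p := pos_of (by omega : (0:ℤ) < m + n) (by omega : (0:ℤ) < r - t) hd
    have hnl : n ≤ (q - p) * n := le_mul_of_one_le_left (by omega) hqp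
    have hl0 : 0 ≤ (q - p) * n + t := by omega
    simp only [Cset, Set.mem_setOf_eq]
    refine ⟨hl0, ⟨by omega, by omega⟩, ⟨by omega, by omega⟩, ?_⟩
    rw [iter_int hn (by omega : -t ≤ n - 1) hl0, if_neg (by omega),
      max_eq_left (by omega : (0:ℤ) ≤ -t)]
    right
    rw [emod_eq' hn0 (-t + ((q - p) * n + t)) 0 (q - p) (by ring) le_rfl (by omega)]
    constructor <;> omega
  · -- case 5
    have ht : 0 ≤ t := by omega
    have hr : 1 ≤ r := by
      by_contra h
      exact h3 ⟨by omega, ht⟩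
    have hqp : 0 ≤ q - p := nonneg_of (by omega : (0:ℤ) < m + n) (by omega) hd
    have hl0 : 0 ≤ (q - p) * n := mul_nonneg hqp (by omega)
    simp only [Cset, Set.mem_setOf_eq]
    refine ⟨hl0, ⟨by omega, by omega⟩, ⟨by omega, by omega⟩, ?_⟩
    rw [iter_int hn (by omega : -m + t ≤ n - 1) hl0]
    by_cases hl : (q - p) * n = 0
    · rw [if_pos hl]
      right
      have : ¬ (1 ≤ q - p) := by
        intro h
        have : n ≤ (q - p) * n := le_mul_of_one_le_left (by omega) h
        omega
      have hq : q - p = 0 := by omega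
      have : r ≤ t := by nlinarith
      constructor <;> omega
    · rw [if_neg hl, max_eq_right (by omega : -m + t ≤ 0)]
      right
      rw [emod_eq' hn0 (0 + (q - p) * n) 0 (q - p) (by ring) le_rfl (by omega)]
      constructor <;> omega

lemma cset_elim {n m : ℤ} (hn : 1 ≤ n) (hm : 0 ≤ m) {k u l v : ℤ}
    (h : (k, u, l, v) ∈ Cset n m) :
    0 ≤ l ∧ (-m ≤ u ∧ u ≤ n - 1) ∧ (-m ≤ v ∧ v ≤ n - 1) ∧
    (1 ≤ u → 0 ≤ v → n ∣ l + u - v) ∧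
    (1 ≤ u → v < 0 → n ∣ l + u) ∧
    (u ≤ 0 → 0 ≤ v → n ∣ l - v ∧ (l = 0 → u = 0 ∧ v = 0)) ∧
    (u ≤ 0 → v < 0 → ¬(l = 0 ∧ v = u) → n ∣ l ∧ (l = 0 → v < u)) := by
  simp only [Cset, Set.mem_setOf_eq] at h
  obtain ⟨hl, ⟨hu0, hu1⟩, ⟨hv0, hv1⟩, horb⟩ := h
  have hn0 : (0:ℤ) < n := by omega
  rw [iter_int hn hu1 hl] at horb
  refine ⟨hl, ⟨hu0, hu1⟩, ⟨hv0, hv1⟩, ?_, ?_, ?_, ?_⟩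
  · intro hu hv
    by_cases h0 : l = 0
    · rw [if_pos h0] at horb
      rcases horb with h | ⟨_, h2⟩
      · exact ⟨0, by omega⟩
      · omega
    · rw [if_neg h0, max_eq_left (by omega : (0:ℤ) ≤ u)] at horb
      have hnn : 0 ≤ (u + l) % n := Int.emod_nonneg _ (by omega)
      rcases horb with h | ⟨h2, h3⟩
      · have := dvd_sub_emod n (u + l)
        rw [← h] at this
        have h2 : u + l - v = l + u - v := by ring
        rw [h2] at this
        exact this
      · omega
  · intro hu hv
    by_cases h0 : l = 0
    · rw [if_pos h0] at horb
      omega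
    · rw [if_neg h0, max_eq_left (by omega : (0:ℤ) ≤ u)] at horb
      have hnn : 0 ≤ (u + l) % n := Int.emod_nonneg _ (by omega)
      rcases horb with h | ⟨h2, h3⟩
      · omega
      · have : (u + l) % n = 0 := by omega
        have := Int.dvd_of_emod_eq_zero this
        exact (by simpa [add_comm] using this : n ∣ l + u)
  · intro hu hv
    by_cases h0 : l = 0
    · rw [if_pos h0] at horb
      rcases horb with h | ⟨h2, h3⟩
      · constructor
        · exact ⟨0, by omega⟩
        · omega
      · omega
    · rw [if_neg h0, max_eq_right (by omega : u ≤ (0:ℤ))] at horb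
      have hnn : 0 ≤ (0 + l) % n := Int.emod_nonneg _ (by omega)
      rcases horb with h | ⟨h2, h3⟩
      · have := dvd_sub_emod n (0 + l)
        rw [← h] at this
        refine ⟨by simpa using this, by omega⟩
      · omega
  · intro hu hv hne
    by_cases h0 : l = 0
    · rw [if_pos h0] at horb
      rcases horb with h | ⟨h2, h3⟩
      · exact absurd ⟨h0, h⟩ hne
      · exact ⟨⟨0, by omega⟩, fun _ => h2⟩
    · rw [if_neg h0, max_eq_right (by omega : u ≤ (0:ℤ))] at horb
      have hnn : 0 ≤ (0 + l) % n := Int.emod_nonneg _ (by omega)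
      rcases horb with h | ⟨h2, h3⟩
      · omega
      · have : (0 + l) % n = 0 := by omega
        have := Int.dvd_of_emod_eq_zero this
        refine ⟨by simpa using this, by omega⟩

def Phi (n m : ℤ) (w : ℤ × ℤ × ℤ × ℤ) : ℤ × ℤ × ℤ × ℤ × ℤ :=
  if 1 ≤ w.2.1 then
    if 0 ≤ w.2.2.2 then
      ((w.2.1 - w.1) % n, (w.2.1 - w.1) / n - (w.2.2.1 + w.2.1 - w.2.2.2) / n,
        (w.2.1 - w.1) / n, -w.2.2.2, -w.2.1)
    else
      ((w.2.1 - w.1) % n, (w.2.1 - w.1) / n - (w.2.2.1 + w.2.1) / n,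
        (w.2.1 - w.1) / n, w.2.2.2 + m + 1, -w.2.1)
  else
    if 0 ≤ w.2.2.2 then
      ((-w.1) % n, (-w.1) / n - (w.2.2.1 - w.2.2.2) / n, (-w.1) / n, -w.2.2.2, w.2.1 + m)
    else if w.2.2.1 = 0 ∧ w.2.2.2 = w.2.1 then
      ((-w.1) % n, (-w.1) / n, (-w.1) / n, 0, w.2.1 + m)
    else
      ((-w.1) % n, (-w.1) / n - w.2.2.1 / n, (-w.1) / n, w.2.2.2 + m + 1, w.2.1 + m)

lemma phi_mapsTo (n m : ℤ) (hn : 1 ≤ n) (hm : 0 ≤ m) :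
    ∀ w ∈ Cset n m, Phi n m w ∈ ThetaDom n m := by
  rintro ⟨k, u, l, v⟩ hw
  obtain ⟨hl, ⟨hu0, hu1⟩, ⟨hv0, hv1⟩, e1, e2, e3, e4⟩ := cset_elim hn hm hw
  have hn0 : (0:ℤ) < n := by omega
  simp only [Phi, ThetaDom, Set.mem_setOf_eq]
  split_ifs with g1 g2 g3 g4 <;>
    simp only [Set.mem_setOf_eq]
  · -- 1 ≤ u, 0 ≤ v
    have hdvd := e1 g1 g2
    have hD := Int.ediv_mul_cancel hdvd
    have hD0 : 0 ≤ (l + u - v) / n := nonneg_of hn0 (by omega) (le_of_eq hD.symm)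
    have hDm : 0 ≤ (l + u - v) / n * m := mul_nonneg hD0 hm
    refine ⟨⟨Int.emod_nonneg _ (by omega), by
      have := Int.emod_lt_of_pos (u - k) hn0; omega⟩,
      ⟨by omega, by omega⟩, ⟨by omega, by omega⟩, by nlinarith⟩
  · -- 1 ≤ u, v < 0
    have hdvd := e2 g1 (by omega)
    have hD := Int.ediv_mul_cancel hdvd
    have hD0 : 1 ≤ (l + u) / n := pos_of hn0 (by omega) (le_of_eq hD.symm)
    have hDm : m ≤ (l + u) / n * m := le_mul_of_one_le_left hm hD0
    refine ⟨⟨Int.emod_nonneg _ (by omega), by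
      have := Int.emod_lt_of_pos (u - k) hn0; omega⟩,
      ⟨by omega, by omega⟩, ⟨by omega, by omega⟩, by nlinarith⟩
  · -- u ≤ 0, 0 ≤ v
    have hdvd := (e3 (by omega) g3).1
    have hD := Int.ediv_mul_cancel hdvd
    have hD0 : 0 ≤ (l - v) / n := nonneg_of hn0 (by omega) (le_of_eq hD.symm)
    have hDm : 0 ≤ (l - v) / n * m := mul_nonneg hD0 hm
    refine ⟨⟨Int.emod_nonneg _ (by omega), by
      have := Int.emod_lt_of_pos (-k) hn0; omega⟩,
      ⟨by omega, by omega⟩, ⟨by omega, by omega⟩, by nlinarith⟩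
  · -- u ≤ 0, v < 0, l = 0 ∧ v = u
    refine ⟨⟨Int.emod_nonneg _ (by omega), by
      have := Int.emod_lt_of_pos (-k) hn0; omega⟩,
      ⟨by omega, by omega⟩, ⟨by omega, by omega⟩, by nlinarith⟩
  · -- u ≤ 0, v < 0, ¬(l = 0 ∧ v = u)
    have he4 := e4 (by omega) (by omega) g4
    have hD := Int.ediv_mul_cancel he4.1
    have hD0 : 0 ≤ l / n := nonneg_of hn0 (by omega) (le_of_eq hD.symm)
    have hDm : 0 ≤ l / n * m := mul_nonneg hD0 hm
    have hkey : v + 1 - u ≤ l / n * m + l := by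
      by_cases h0 : l = 0
      · have := he4.2 h0
        omega
      · have hD1 : 1 ≤ l / n := pos_of hn0 (by omega) (le_of_eq hD.symm)
        have : m ≤ l / n * m := le_mul_of_one_le_left hm hD1
        omega
    refine ⟨⟨Int.emod_nonneg _ (by omega), by
      have := Int.emod_lt_of_pos (-k) hn0; omega⟩,
      ⟨by omega, by omega⟩, ⟨by omega, by omega⟩, by nlinarith⟩

lemma phi_theta (n m : ℤ) (hn : 1 ≤ n) (hm : 0 ≤ m) :
    ∀ x ∈ ThetaDom n m,
      Phi n m (Theta n m x.1 x.2.1 x.2.2.1 x.2.2.2.1 x.2.2.2.2) = x := by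
  rintro ⟨i, p, q, r, t⟩ hx
  simp only [ThetaDom, Set.mem_setOf_eq] at hx
  obtain ⟨⟨hi0, hi1⟩, ⟨hr0, hr1⟩, ⟨ht0, ht1⟩, hle⟩ := hx
  have hn0 : (0:ℤ) < n := by omega
  have hd : r - t ≤ (q - p) * (m + n) := by nlinarith
  simp only [Theta]
  split_ifs with h1 h2 h3 h4
  · -- case 1
    obtain ⟨hr, ht⟩ := h1
    simp only [Phi]
    rw [if_pos (by omega : (1:ℤ) ≤ -t), if_pos (by omega : (0:ℤ) ≤ -r)]
    have ha : -t - (-q * n - t - i) = q * n + i := by ring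
    obtain ⟨hdiv, hmod⟩ := euclid hn0 ha (by omega) (by omega)
    rw [hdiv, hmod, show (q - p) * n + (t - r) + -t - -r = (q - p) * n by ring,
      Int.mul_ediv_cancel _ (by omega : n ≠ 0)]
    simp only [Prod.mk.injEq, true_and, and_true]
    omega
  · -- case 2
    obtain ⟨hr, ht, hpos⟩ := h2
    simp only [Phi]
    rw [if_neg (by omega : ¬ (1:ℤ) ≤ -m + t), if_pos (by omega : (0:ℤ) ≤ -r)]
    have ha : -(-q * n - i) = q * n + i := by ring
    obtain ⟨hdiv, hmod⟩ := euclid hn0 ha (by omega) (by omega)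
    rw [hdiv, hmod, show (q - p) * n - r - -r = (q - p) * n by ring,
      Int.mul_ediv_cancel _ (by omega : n ≠ 0)]
    simp only [Prod.mk.injEq, true_and, and_true]
    omega
  · -- case 3 : p = q, r = 0 forced
    obtain ⟨hr, ht⟩ := h3
    have hqp : 0 ≤ q - p := nonneg_of (by omega : (0:ℤ) < m + n) (by omega) hd
    have hqp2 : ¬ (1 ≤ q - p) := by
      intro h
      have : n ≤ (q - p) * n := le_mul_of_one_le_left (by omega) h
      omega
    have hq : q - p = 0 := by omega
    have hr2 : ¬ 0 < (q - p) * n - r := fun hh => h2 ⟨hr, ht, hh⟩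
    have hr' : r = 0 := by
      have : (q - p) * n = 0 := by rw [hq, zero_mul]
      omega
    have ha : -(-q * n - i) = q * n + i := by ring
    obtain ⟨hdiv, hmod⟩ := euclid hn0 ha (by omega) (by omega)
    simp only [Phi]
    rw [if_neg (by omega : ¬ (1:ℤ) ≤ -m + t)]
    by_cases hv : (0:ℤ) ≤ -m + t
    · rw [if_pos hv, hdiv, hmod, show (0:ℤ) - (-m + t) = 0 by omega, Int.zero_ediv]
      simp only [Prod.mk.injEq, true_and, and_true]
      omega
    · rw [if_neg hv, if_pos (show True ∧ True from ⟨trivial, trivial⟩), hdiv, hmod]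
      simp only [Prod.mk.injEq, true_and, and_true]
      omega
  · -- case 4
    have hr : 1 ≤ r := by
      by_contra h
      exact h1 ⟨by omega, h4⟩
    simp only [Phi]
    rw [if_pos (by omega : (1:ℤ) ≤ -t), if_neg (by omega : ¬ (0:ℤ) ≤ -m - 1 + r)]
    have ha : -t - (-q * n - t - i) = q * n + i := by ring
    obtain ⟨hdiv, hmod⟩ := euclid hn0 ha (by omega) (by omega)
    rw [hdiv, hmod, show (q - p) * n + t + -t = (q - p) * n by ring,
      Int.mul_ediv_cancel _ (by omega : n ≠ 0)]
    simp only [Prod.mk.injEq, true_and, and_true]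
    omega
  · -- case 5
    have ht : 0 ≤ t := by omega
    have hr : 1 ≤ r := by
      by_contra h
      exact h3 ⟨by omega, ht⟩
    have ha : -(-q * n - i) = q * n + i := by ring
    obtain ⟨hdiv, hmod⟩ := euclid hn0 ha (by omega) (by omega)
    simp only [Phi]
    rw [if_neg (by omega : ¬ (1:ℤ) ≤ -m + t), if_neg (by omega : ¬ (0:ℤ) ≤ -m - 1 + r)]
    rw [if_neg (by
      rintro ⟨hz, he⟩
      have : q - p = 0 := by
        rcases mul_eq_zero.mp hz with h | h
        · exact h
        · omega
      have : r ≤ t := by nlinarith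
      omega)]
    rw [hdiv, hmod, Int.mul_ediv_cancel _ (by omega : n ≠ 0)]
    simp only [Prod.mk.injEq, true_and, and_true]
    omega

lemma theta_phi (n m : ℤ) (hn : 1 ≤ n) (hm : 0 ≤ m) :
    ∀ w ∈ Cset n m,
      (fun x : ℤ × ℤ × ℤ × ℤ × ℤ =>
        Theta n m x.1 x.2.1 x.2.2.1 x.2.2.2.1 x.2.2.2.2) (Phi n m w) = w := by
  rintro ⟨k, u, l, v⟩ hw
  obtain ⟨hl, ⟨hu0, hu1⟩, ⟨hv0, hv1⟩, e1, e2, e3, e4⟩ := cset_elim hn hm hw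
  have hn0 : (0:ℤ) < n := by omega
  simp only [Phi]
  rcases le_or_gt 1 u with g1 | g1
  · -- 1 ≤ u
    rw [if_pos g1]
    have hQ := Int.mul_ediv_add_emod (u - k) n
    rcases le_or_gt 0 v with g2 | g2
    · rw [if_pos g2]
      have hD := Int.ediv_mul_cancel (e1 g1 g2)
      simp only [Theta]
      rw [if_pos (⟨by omega, by omega⟩ : -v ≤ 0 ∧ -u ≤ -1)]
      simp only [Prod.mk.injEq]
      refine ⟨by linarith, by omega, by linarith, by omega⟩
    · rw [if_neg (by omega : ¬ (0:ℤ) ≤ v)]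
      have hD := Int.ediv_mul_cancel (e2 g1 g2)
      simp only [Theta]
      rw [if_neg (by rintro ⟨hh, -⟩; omega : ¬ (v + m + 1 ≤ 0 ∧ -u ≤ -1)),
        if_neg (by rintro ⟨hh, -⟩; omega), if_neg (by rintro ⟨hh, -⟩; omega),
        if_pos (by omega : -u ≤ -1)]
      simp only [Prod.mk.injEq]
      refine ⟨by linarith, by omega, by linarith, by omega⟩
  · -- u ≤ 0
    rw [if_neg (by omega : ¬ 1 ≤ u)]
    have hQ := Int.mul_ediv_add_emod (-k) n
    rcases le_or_gt 0 v with g2 | g2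
    · rw [if_pos g2]
      have he3 := e3 (by omega) g2
      have hD := Int.ediv_mul_cancel he3.1
      simp only [Theta]
      rw [if_neg (by rintro ⟨-, hh⟩; omega : ¬ (-v ≤ 0 ∧ u + m ≤ -1))]
      by_cases hl0 : 0 < l
      · rw [if_pos (⟨by omega, by omega, by linarith⟩ :
          -v ≤ 0 ∧ 0 ≤ u + m ∧
            0 < ((-k) / n - ((-k) / n - (l - v) / n)) * n - -v)]
        simp only [Prod.mk.injEq]
        refine ⟨by linarith, by omega, by linarith, by omega⟩
      · have hl' : l = 0 := by omega
        obtain ⟨hu', hv'⟩ := he3.2 hl'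
        rw [if_neg (by rintro ⟨-, -, hh⟩; nlinarith),
          if_pos (⟨by omega, by omega⟩ : -v ≤ 0 ∧ 0 ≤ u + m)]
        simp only [Prod.mk.injEq]
        refine ⟨by linarith, by omega, by omega, by omega⟩
    · rw [if_neg (by omega : ¬ (0:ℤ) ≤ v)]
      by_cases g3 : l = 0 ∧ v = u
      · rw [if_pos g3]
        simp only [Theta]
        rw [if_neg (by rintro ⟨-, hh⟩; omega : ¬ ((0:ℤ) ≤ 0 ∧ u + m ≤ -1)),
          if_neg (by rintro ⟨-, -, hh⟩; nlinarith),
          if_pos (⟨le_rfl, by omega⟩ : (0:ℤ) ≤ 0 ∧ 0 ≤ u + m)]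
        simp only [Prod.mk.injEq]
        refine ⟨by linarith, by omega, by omega, by omega⟩
      · rw [if_neg g3]
        have he4 := e4 (by omega) g2 g3
        have hD := Int.ediv_mul_cancel he4.1
        simp only [Theta]
        rw [if_neg (by rintro ⟨hh, -⟩; omega : ¬ (v + m + 1 ≤ 0 ∧ u + m ≤ -1)),
          if_neg (by rintro ⟨hh, -⟩; omega), if_neg (by rintro ⟨hh, -⟩; omega),
          if_neg (by omega : ¬ u + m ≤ -1)]
        simp only [Prod.mk.injEq]
        refine ⟨by linarith, by omega, by linarith, by omega⟩


/-- `Θ` is a bijection from its domain onto the set `C`. -/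
theorem stmt18 (n m : ℤ) (hn : 1 ≤ n) (hm : 0 ≤ m) :
    Set.BijOn (fun x : ℤ × ℤ × ℤ × ℤ × ℤ =>
        Theta n m x.1 x.2.1 x.2.2.1 x.2.2.2.1 x.2.2.2.2)
      (ThetaDom n m) (Cset n m) := by
  exact Set.InvOn.bijOn ⟨fun x hx => phi_theta n m hn hm x hx,
      fun w hw => theta_phi n m hn hm w hw⟩
    (fun x hx => theta_mapsTo n m hn hm x hx)
    (fun w hw => phi_mapsTo n m hn hm w hw)
end

section
/- Up to the equivalence relation identifying a homotopy string θ with its reverse θ̄, every homotopy string in the quiver Q(n,m) (with relations α_{j−1}α_j cyclically among the cycle arrows α_0,…,α_{n−1}) is exactly one of: (a) a stationary path at a vertex; (b) α_u α_{u+1} ⋯ α_{u+l} for u ∈ [−m,n−1], l ∈ ℕ (indices of the α's ≥ 0 read modulo n); (c) α_u ⋯ α_{u+l} ᾱ_{−1} ⋯ ᾱ_v for u ∈ [−m,n−1], v ∈ [−m,−1], l ∈ ℕ with u+l ≥ 0 and u+l ≡ n−1 (mod n). -/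
/- The quiver `Q(n,m)` has vertices `[-m, n-1]` and arrows `α_u : t(u) → u`,
`u ∈ [-m, n-1]`, where `t(u) = u + 1` for `u ∈ [-m, n-2]` and `t(n-1) = 0`,
bound by the relations `α_{n-1}α_0, α_{n-2}α_{n-1}, …, α_0α_1`.
A letter `(w, true)` denotes the direct arrow `α_w`, a letter `(w, false)` its
formal inverse `ᾱ_w`; a homotopy string is a composable word in the letters
avoiding subpaths `αᾱ`, `ᾱα` and the zero relations (and their inverses). -/

/-- The tail vertex of the arrow `α_u` in `Q(n,m)`. -/
def tailV (n u : ℤ) : ℤ := if u = n - 1 then 0 else u + 1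

/-- The starting vertex of a letter (a path `β₁ β₂ ⋯` is composed like
functions, so a letter's start must match the next letter's end). -/
def startL (n : ℤ) (ℓ : ℤ × Bool) : ℤ := if ℓ.2 then tailV n ℓ.1 else ℓ.1

/-- The ending vertex of a letter. -/
def endL (n : ℤ) (ℓ : ℤ × Bool) : ℤ := if ℓ.2 then ℓ.1 else tailV n ℓ.1

/-- Admissibility of two consecutive letters `ℓ₁ ℓ₂` in a homotopy string:
they are composable, are not mutually inverse, and do not form a zero relation
`α_j α_{(j+1) mod n}` (nor the inverse of one). -/
def adm (n : ℤ) (ℓ₁ ℓ₂ : ℤ × Bool) : Prop :=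
  startL n ℓ₁ = endL n ℓ₂ ∧
  ¬(ℓ₁.1 = ℓ₂.1 ∧ ℓ₁.2 ≠ ℓ₂.2) ∧
  ¬(ℓ₁.2 = true ∧ ℓ₂.2 = true ∧ 0 ≤ ℓ₁.1 ∧ 0 ≤ ℓ₂.1 ∧ (ℓ₁.1 + 1) % n = ℓ₂.1) ∧
  ¬(ℓ₁.2 = false ∧ ℓ₂.2 = false ∧ 0 ≤ ℓ₁.1 ∧ 0 ≤ ℓ₂.1 ∧ (ℓ₂.1 + 1) % n = ℓ₁.1)

/-- A homotopy string in `Q(n,m)`: all letters are arrows of the quiver and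
consecutive letters are admissible. The empty list stands for a stationary
path. -/
def IsHomotopyString (n m : ℤ) (θ : List (ℤ × Bool)) : Prop :=
  (∀ ℓ ∈ θ, -m ≤ ℓ.1 ∧ ℓ.1 ≤ n - 1) ∧ θ.Chain' (adm n)

/-- The reverse (formal inverse) `θ̄` of a homotopy string. -/
def revStr (θ : List (ℤ × Bool)) : List (ℤ × Bool) :=
  (θ.map fun ℓ => (ℓ.1, !ℓ.2)).reverse

/-- Index convention: for `w ≥ n`, `α_w` denotes `α_{w % n}`. -/
def idx (n w : ℤ) : ℤ := if w < 0 then w else w % n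

/-- Form (b): the string `α_u α_{u+1} ⋯ α_{u+l}`. -/
def formB (n u : ℤ) (l : ℕ) : List (ℤ × Bool) :=
  (List.range (l + 1)).map fun j => (idx n (u + j), true)

/-- Form (c): the string `α_u ⋯ α_{u+l} ᾱ_{-1} ᾱ_{-2} ⋯ ᾱ_v`. -/
def formC (n u : ℤ) (l : ℕ) (v : ℤ) : List (ℤ × Bool) :=
  formB n u l ++ ((List.range (-v).toNat).map fun j => (-1 - (j : ℤ), false))

/-- `θ` is, up to reversal, of the form (b) `α_u ⋯ α_{u+l}`, `u ∈ [-m,n-1]`. -/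
def isFormB (n m : ℤ) (θ : List (ℤ × Bool)) : Prop :=
  ∃ (u : ℤ) (l : ℕ), -m ≤ u ∧ u ≤ n - 1 ∧
    (θ = formB n u l ∨ θ = revStr (formB n u l))

/-- `θ` is, up to reversal, of the form (c) `α_u ⋯ α_{u+l} ᾱ_{-1} ⋯ ᾱ_v`,
`u ∈ [-m,n-1]`, `v ∈ [-m,-1]`, `u + l ≥ 0`, `u + l ≡ n - 1 (mod n)`. -/
def isFormC (n m : ℤ) (θ : List (ℤ × Bool)) : Prop :=
  ∃ (u v : ℤ) (l : ℕ), -m ≤ u ∧ u ≤ n - 1 ∧ -m ≤ v ∧ v ≤ -1 ∧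
    0 ≤ u + (l : ℤ) ∧ (u + (l : ℤ)) % n = (n - 1) % n ∧
    (θ = formC n u l v ∨ θ = revStr (formC n u l v))

/-! In `Q(n,m)` any two consecutive arrows of the cycle form a zero relation. Hence two direct
letters `α_a α_b` can only be adjacent when `b = a + 1` with `a < 0` (inside the tail), and
dually for inverse letters; an inverse letter is never followed by a direct one; and `α_a ᾱ_b`
forces `α_a, α_b` to share their source `0`, i.e. `{a, b} = {n - 1, -1}`. So every homotopy
string is an ascending run of direct letters followed by a descending run of inverse letters,
which is of form (b) or (c) or the reverse of one. Strings of form (b) use one kind of letter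
only, those of form (c) use both, so the forms are disjoint. -/

lemma tailV_eq_emod {n a : ℤ} (ha₀ : 0 ≤ a) (ha : a ≤ n - 1) : tailV n a = (a + 1) % n := by
  unfold tailV
  split_ifs with h
  · simp [h]
  · rw [Int.emod_eq_of_lt (by omega) (by omega)]

section Adjacency

variable {n a b : ℤ}

lemma adm_true_true (hn : 1 ≤ n) (ha : a ≤ n - 1) (h : adm n (a, true) (b, true)) :
    b = a + 1 ∧ a < 0 := by
  obtain ⟨hcomp, -, hrel, -⟩ := h
  simp only [startL, endL, if_true] at hcomp
  by_cases ha₀ : 0 ≤ a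
  · refine absurd ⟨rfl, rfl, ha₀, ?_, (tailV_eq_emod ha₀ ha).symm.trans hcomp⟩ hrel
    unfold tailV at hcomp
    split_ifs at hcomp <;> omega
  · unfold tailV at hcomp
    split_ifs at hcomp <;> omega

lemma adm_false_false (hn : 1 ≤ n) (hb : b ≤ n - 1) (h : adm n (a, false) (b, false)) :
    a = b + 1 ∧ b < 0 := by
  obtain ⟨hcomp, -, -, hrel⟩ := h
  simp only [startL, endL, Bool.false_eq_true, if_false] at hcomp
  by_cases hb₀ : 0 ≤ b
  · refine absurd ⟨rfl, rfl, ?_, hb₀, (tailV_eq_emod hb₀ hb).symm.trans hcomp.symm⟩ hrel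
    unfold tailV at hcomp
    split_ifs at hcomp <;> omega
  · unfold tailV at hcomp
    split_ifs at hcomp <;> omega

lemma not_adm_false_true : ¬ adm n (a, false) (b, true) := by
  rintro ⟨hcomp, hinv, -⟩
  simp only [startL, endL, Bool.false_eq_true, if_false, if_true] at hcomp
  exact hinv ⟨hcomp, by simp⟩

lemma adm_true_false (h : adm n (a, true) (b, false)) :
    (a = n - 1 ∧ b = -1) ∨ (a = -1 ∧ b = n - 1) := by
  obtain ⟨hcomp, hinv, -⟩ := h
  simp only [startL, endL, tailV, Bool.false_eq_true, if_false, if_true] at hcomp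
  have : a ≠ b := fun h => hinv ⟨h, by simp⟩
  split_ifs at hcomp <;> omega

end Adjacency

def ascRun (a : ℤ) (k : ℕ) : List (ℤ × Bool) :=
  (List.range k).map fun (j : ℕ) => (a + (j : ℤ), true)

def descRun (b : ℤ) (r : ℕ) : List (ℤ × Bool) :=
  (List.range r).map fun (j : ℕ) => (b - (j : ℤ), false)

@[simp] lemma ascRun_zero (a : ℤ) : ascRun a 0 = [] := rfl

@[simp] lemma descRun_zero (b : ℤ) : descRun b 0 = [] := rfl

lemma ascRun_succ (a : ℤ) (k : ℕ) : ascRun a (k + 1) = (a, true) :: ascRun (a + 1) k := by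
  simp only [ascRun, List.range_succ_eq_map, List.map_cons, List.map_map]
  congr 1
  · simp
  · refine List.map_congr_left fun j _ => ?_
    simp only [Function.comp_apply, Nat.cast_succ, Prod.mk.injEq, and_true]
    ring

lemma descRun_succ (b : ℤ) (r : ℕ) : descRun b (r + 1) = (b, false) :: descRun (b - 1) r := by
  simp only [descRun, List.range_succ_eq_map, List.map_cons, List.map_map]
  congr 1
  · simp
  · refine List.map_congr_left fun j _ => ?_
    simp only [Function.comp_apply, Nat.cast_succ, Prod.mk.injEq, and_true]
    ring

lemma mem_ascRun {a : ℤ} {k : ℕ} {ℓ : ℤ × Bool} :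
    ℓ ∈ ascRun a k ↔ ∃ j < k, (a + j, true) = ℓ := by
  simp [ascRun]

lemma mem_descRun {b : ℤ} {r : ℕ} {ℓ : ℤ × Bool} :
    ℓ ∈ descRun b r ↔ ∃ j < r, (b - j, false) = ℓ := by
  simp [descRun]

lemma revStr_revStr (θ : List (ℤ × Bool)) : revStr (revStr θ) = θ := by
  simp [revStr, List.map_reverse, Function.comp_def]

lemma revStr_append (θ₁ θ₂ : List (ℤ × Bool)) :
    revStr (θ₁ ++ θ₂) = revStr θ₂ ++ revStr θ₁ := by
  simp [revStr]

lemma mem_revStr {θ : List (ℤ × Bool)} {x : ℤ} {s : Bool} :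
    (x, s) ∈ revStr θ ↔ (x, !s) ∈ θ := by
  simp [revStr]

lemma revStr_ascRun (a : ℤ) (k : ℕ) : revStr (ascRun a k) = descRun (a + k - 1) k := by
  refine List.ext_getElem (by simp [revStr, ascRun, descRun]) fun i hi _ => ?_
  simp only [revStr, List.length_reverse, List.length_map, ascRun, List.length_range] at hi
  simp [revStr, ascRun, descRun]
  omega

lemma revStr_descRun (b : ℤ) (r : ℕ) : revStr (descRun b r) = ascRun (b - r + 1) r := by
  rw [← revStr_revStr (ascRun _ _), revStr_ascRun]
  congr 2
  ring

theorem eq_ascRun_append_descRun {n : ℤ} (hn : 1 ≤ n) {θ : List (ℤ × Bool)}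
    (hle : ∀ ℓ ∈ θ, ℓ.1 ≤ n - 1) (hθ : θ.IsChain (adm n)) :
    ∃ (a b : ℤ) (k r : ℕ), θ = ascRun a k ++ descRun b r ∧
      (k ≠ 0 → r ≠ 0 →
        (a + k - 1 = n - 1 ∧ b = -1) ∨ (a + k - 1 = -1 ∧ b = n - 1)) := by
  induction θ with
  | nil => exact ⟨0, 0, 0, 0, rfl, by simp⟩
  | cons ℓ θ ih =>
    obtain ⟨c, s⟩ := ℓ
    have hc : c ≤ n - 1 := hle _ List.mem_cons_self
    obtain ⟨a, b, k, r, rfl, hjunction⟩ :=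
      ih (fun ℓ hℓ => hle ℓ (List.mem_cons_of_mem _ hℓ)) hθ.tail
    have hadm_head {ℓ θ'} (h : ascRun a k ++ descRun b r = ℓ :: θ') : adm n (c, s) ℓ := by
      rw [h] at hθ
      exact (List.isChain_cons_cons.mp hθ).1
    rcases k with _ | k
    · rcases r with _ | r
      · cases s
        · exact ⟨0, c, 0, 1, by simp [ascRun, descRun], by simp⟩
        · exact ⟨c, 0, 1, 0, by simp [ascRun, descRun], by simp⟩
      · have hadm := hadm_head (by rw [descRun_succ]; rfl)
        cases s
        · obtain ⟨rfl, -⟩ := adm_false_false hn (hle (b, false) (by simp [descRun_succ])) hadm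
          exact ⟨0, b + 1, 0, r + 2, by simp [ascRun, descRun_succ], by simp⟩
        · refine ⟨c, b, 1, r + 1, by simp [ascRun], fun _ _ => ?_⟩
          simpa using adm_true_false hadm
    · have hadm := hadm_head (by rw [ascRun_succ]; rfl)
      cases s
      · exact absurd hadm not_adm_false_true
      · obtain ⟨rfl, -⟩ := adm_true_true hn hc hadm
        refine ⟨c, b, k + 2, r, by simp [ascRun_succ], fun _ hr => ?_⟩
        have := hjunction (by simp) hr
        push_cast at this ⊢
        omega

-- In `formB` and `formC` the bound variable is an integer: `List.range _` is coerced to `List ℤ`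
-- by a monad lift, which the `pure`/`bind` normalisation below undoes.
lemma formB_eq_map (n u : ℤ) (l : ℕ) :
    formB n u l = (List.range (l + 1)).map fun (j : ℕ) => (idx n (u + j), true) := by
  simp only [formB, List.pure_def, List.bind_eq_flatMap, ← List.map_eq_flatMap, List.map_map]
  rfl

lemma formB_eq_ascRun {n u : ℤ} {l : ℕ} (h : u + l ≤ n - 1) :
    formB n u l = ascRun u (l + 1) := by
  rw [formB_eq_map]
  refine List.map_congr_left fun j hj => ?_
  rw [List.mem_range] at hj
  simp only [idx, Prod.mk.injEq, and_true]
  split_ifs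
  · rfl
  · exact Int.emod_eq_of_lt (by omega) (by omega)

lemma formC_eq_formB_append (n u : ℤ) (l : ℕ) (v : ℤ) :
    formC n u l v = formB n u l ++ descRun (-1) (-v).toNat := by
  simp only [formC, descRun, List.pure_def, List.bind_eq_flatMap, ← List.map_eq_flatMap,
    List.map_map]
  rfl

section Forms

variable {n m : ℤ} {θ : List (ℤ × Bool)}

lemma isFormB_revStr (h : isFormB n m θ) : isFormB n m (revStr θ) := by
  obtain ⟨u, l, hu₁, hu₂, rfl | rfl⟩ := h
  exacts [⟨u, l, hu₁, hu₂, Or.inr rfl⟩, ⟨u, l, hu₁, hu₂, Or.inl (revStr_revStr _)⟩]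

lemma isFormC_revStr (h : isFormC n m θ) : isFormC n m (revStr θ) := by
  obtain ⟨u, v, l, hu₁, hu₂, hv₁, hv₂, hl₁, hl₂, rfl | rfl⟩ := h
  exacts [⟨u, v, l, hu₁, hu₂, hv₁, hv₂, hl₁, hl₂, Or.inr rfl⟩,
    ⟨u, v, l, hu₁, hu₂, hv₁, hv₂, hl₁, hl₂, Or.inl (revStr_revStr _)⟩]

lemma isFormB_ascRun {a : ℤ} {k : ℕ} (ha : -m ≤ a) (hak : a + k ≤ n - 1) :
    isFormB n m (ascRun a (k + 1)) :=
  ⟨a, k, ha, by omega, Or.inl (formB_eq_ascRun hak).symm⟩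

lemma isFormC_ascRun_append_descRun (hn : 1 ≤ n) {a : ℤ} {k r : ℕ} (ha : -m ≤ a)
    (hak : a + k = n - 1) (hr : -m ≤ -1 - r) :
    isFormC n m (ascRun a (k + 1) ++ descRun (-1) (r + 1)) := by
  refine ⟨a, -(r + 1), k, ha, by omega, by omega, by omega, by omega, by rw [hak], Or.inl ?_⟩
  rw [formC_eq_formB_append, formB_eq_ascRun hak.le]
  rfl

lemma isFormB.ne_nil (h : isFormB n m θ) : θ ≠ [] := by
  obtain ⟨u, l, -, -, rfl | rfl⟩ := h <;> simp [formB_eq_map, revStr]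

lemma isFormB.exists_forall_snd_eq (h : isFormB n m θ) : ∃ s, ∀ ℓ ∈ θ, ℓ.2 = s := by
  obtain ⟨u, l, -, -, rfl | rfl⟩ := h
  · exact ⟨true, by simp [formB_eq_map]⟩
  · exact ⟨false, by simp [formB_eq_map, revStr]⟩

lemma isFormC.exists_mem (h : isFormC n m θ) (s : Bool) : ∃ x, (x, s) ∈ θ := by
  obtain ⟨u, v, l, -, -, -, hv, -, -, hθ⟩ := h
  have hdirect : (idx n u, true) ∈ formC n u l v := by
    rw [formC_eq_formB_append, formB_eq_map]
    exact List.mem_append_left _ (List.mem_map.2 ⟨0, by simp, by simp⟩)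
  have hinverse : ((-1 : ℤ), false) ∈ formC n u l v := by
    rw [formC_eq_formB_append]
    exact List.mem_append_right _ (mem_descRun.2 ⟨0, by omega, by simp⟩)
  rcases hθ with rfl | rfl <;> cases s
  exacts [⟨-1, hinverse⟩, ⟨_, hdirect⟩, ⟨_, mem_revStr.2 hdirect⟩,
    ⟨-1, mem_revStr.2 hinverse⟩]

lemma isFormC.not_isFormB (h : isFormC n m θ) : ¬ isFormB n m θ := fun hB => by
  obtain ⟨s, hs⟩ := hB.exists_forall_snd_eq
  obtain ⟨x, hx⟩ := h.exists_mem (!s)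
  simpa using hs _ hx

end Forms

theorem IsHomotopyString.eq_nil_or_isFormB_or_isFormC {n m : ℤ} (hn : 1 ≤ n)
    {θ : List (ℤ × Bool)} (hθ : IsHomotopyString n m θ) :
    θ = [] ∨ isFormB n m θ ∨ isFormC n m θ := by
  obtain ⟨hbound, hchain⟩ := hθ
  obtain ⟨a, b, k, r, rfl, hjunction⟩ :=
    eq_ascRun_append_descRun hn (fun ℓ hℓ => (hbound ℓ hℓ).2) hchain
  have hasc (j : ℕ) (hj : j < k) : -m ≤ a + j ∧ a + j ≤ n - 1 :=
    hbound _ (List.mem_append_left _ (mem_ascRun.2 ⟨j, hj, rfl⟩))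
  have hdesc (j : ℕ) (hj : j < r) : -m ≤ b - j ∧ b - j ≤ n - 1 :=
    hbound _ (List.mem_append_right _ (mem_descRun.2 ⟨j, hj, rfl⟩))
  rcases k with _ | k <;> rcases r with _ | r
  · simp
  · have hb := (hdesc 0 (by omega)).2
    have hbr := (hdesc r (by omega)).1
    rw [ascRun_zero, List.nil_append, ← revStr_revStr (descRun b _), revStr_descRun]
    exact Or.inr (Or.inl (isFormB_revStr (isFormB_ascRun (by push_cast; omega)
      (by push_cast at hb ⊢; omega))))
  · have ha : -m ≤ a := by simpa using (hasc 0 (by omega)).1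
    rw [descRun_zero, List.append_nil]
    exact Or.inr (Or.inl (isFormB_ascRun ha (hasc k (by omega)).2))
  · have ha : -m ≤ a := by simpa using (hasc 0 (by omega)).1
    have hbr := (hdesc r (by omega)).1
    push_cast at hjunction
    refine Or.inr (Or.inr ?_)
    rcases hjunction (by omega) (by omega) with ⟨hk, rfl⟩ | ⟨hk, rfl⟩
    · exact isFormC_ascRun_append_descRun hn ha (by omega) hbr
    · obtain rfl : a = -1 - k := by omega
      have hrev : revStr (ascRun (-1 - k) (k + 1) ++ descRun (n - 1) (r + 1)) =
          ascRun (n - 1 - r) (r + 1) ++ descRun (-1) (k + 1) := by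
        rw [revStr_append, revStr_descRun, revStr_ascRun]
        congr 2
        push_cast
        ring
      rw [← revStr_revStr (_ ++ _), hrev]
      exact isFormC_revStr (isFormC_ascRun_append_descRun hn (by omega) (by ring) (by omega))

theorem stmt19_general (n m : ℤ) (hn : 1 ≤ n)
    (θ : List (ℤ × Bool)) (hθ : IsHomotopyString n m θ) :
    (θ = [] ∧ ¬isFormB n m θ ∧ ¬isFormC n m θ) ∨
    (θ ≠ [] ∧
      ((isFormB n m θ ∧ ¬isFormC n m θ) ∨ (isFormC n m θ ∧ ¬isFormB n m θ))) := by
  rcases hθ.eq_nil_or_isFormB_or_isFormC hn with rfl | hB | hC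
  · exact Or.inl ⟨rfl, fun hB => hB.ne_nil rfl, fun hC => by simpa using hC.exists_mem true⟩
  · exact Or.inr ⟨hB.ne_nil, Or.inl ⟨hB, fun hC => hC.not_isFormB hB⟩⟩
  · obtain ⟨x, hx⟩ := hC.exists_mem true
    exact Or.inr ⟨List.ne_nil_of_mem hx, Or.inr ⟨hC, hC.not_isFormB⟩⟩

/-- Classification of homotopy strings in `Q(n,m)`: up to reversal, every
homotopy string is exactly one of (a) a stationary path (the empty string),
(b) `α_u ⋯ α_{u+l}`, or (c) `α_u ⋯ α_{u+l} ᾱ_{-1} ⋯ ᾱ_v`. -/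
theorem stmt19 (n m : ℤ) (hn : 1 ≤ n) (hm : 0 ≤ m)
    (θ : List (ℤ × Bool)) (hθ : IsHomotopyString n m θ) :
    (θ = [] ∧ ¬isFormB n m θ ∧ ¬isFormC n m θ) ∨
    (θ ≠ [] ∧
      ((isFormB n m θ ∧ ¬isFormC n m θ) ∨ (isFormC n m θ ∧ ¬isFormB n m θ))) :=
  stmt19_general n m hn θ hθ
end
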